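/- Let α ∈ (0,1). Then the limit as q → 1 (q ≠ 1) of ((α^q + (1-α)^q - 2^{1-q})/(α^q + (1-α)^q + q - 2)) · (1 - t_q(α)) exists and equals ln 2 - h(α), where h(α) = -α ln α - (1-α) ln(1-α). (Hence the main Tsallis uncertainty bound converges as q → 1 to the Shannon bound 2(ln 2 - h(λ))(1 - c²).) -/

import Mathlib

/-!
Both factors are difference quotients at `q = 1`. Since `1 - t_q(α)` equals
`(α^q + (1-α)^q + q - 2)/(q - 1)`, the product collapses to
`(α^q + (1-α)^q - 2^(1-q))/(q - 1)`, whose limit is the derivative `ln 2 - h(α)` at `q = 1`.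
Dividing and multiplying by `1 - t_q(α) → 1 - h(α)` is legitimate because `h(α) ≤ ln 2 < 1`.
-/

open Real

/-- Tsallis point entropy `t_q(x) = (1 - x^q - (1-x)^q)/(q-1)` (real powers). -/
noncomputable def tq (q x : ℝ) : ℝ := (1 - x ^ q - (1 - x) ^ q) / (q - 1)

/-- Binary entropy `h(x) = -x ln x - (1-x) ln(1-x)` (natural logarithm). -/
noncomputable def binEnt (x : ℝ) : ℝ := -(x * Real.log x) - (1 - x) * Real.log (1 - x)

open Filter Topology

theorem binEnt_eq_binEntropy (x : ℝ) : binEnt x = binEntropy x := by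
  simp only [binEnt, binEntropy, Real.log_inv]
  ring

theorem binEnt_lt_one (x : ℝ) : binEnt x < 1 :=
  calc binEnt x ≤ log 2 := binEnt_eq_binEntropy x ▸ binEntropy_le_log_two
    _ < 1 := by linarith [log_two_lt_d9]

theorem tendsto_div_sub_of_hasDerivAt {f : ℝ → ℝ} {f' a : ℝ} (hf : HasDerivAt f f' a)
    (ha : f a = 0) : Tendsto (fun x => f x / (x - a)) (𝓝[≠] a) (𝓝 f') := by
  refine (hasDerivAt_iff_tendsto_slope.mp hf).congr fun x => ?_
  rw [slope_def_field, ha, sub_zero]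

theorem hasDerivAt_rpow_add_one_sub_rpow {α : ℝ} (hα : α ∈ Set.Ioo (0 : ℝ) 1) :
    HasDerivAt (fun q : ℝ => α ^ q + (1 - α) ^ q) (-binEnt α) 1 := by
  refine ((hasStrictDerivAt_const_rpow hα.1 1).hasDerivAt.add
    (hasStrictDerivAt_const_rpow (sub_pos.mpr hα.2) 1).hasDerivAt).congr_deriv ?_
  simp only [binEnt, rpow_one]
  ring

theorem one_sub_tq {q : ℝ} (hq : q ≠ 1) (x : ℝ) :
    1 - tq q x = (x ^ q + (1 - x) ^ q + q - 2) / (q - 1) := by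
  have : q - 1 ≠ 0 := sub_ne_zero.mpr hq
  rw [tq]
  field_simp
  ring

theorem tendsto_rpow_add_rpow_sub_two_rpow_div {α : ℝ} (hα : α ∈ Set.Ioo (0 : ℝ) 1) :
    Tendsto (fun q : ℝ => (α ^ q + (1 - α) ^ q - 2 ^ (1 - q)) / (q - 1)) (𝓝[≠] 1)
      (𝓝 (log 2 - binEnt α)) := by
  have h2 : HasDerivAt (fun q : ℝ => (2 : ℝ) ^ (1 - q)) (log 2 * (-1) * 2 ^ (1 - 1 : ℝ)) 1 :=
    ((hasDerivAt_id (1 : ℝ)).const_sub 1).const_rpow two_pos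
  convert tendsto_div_sub_of_hasDerivAt ((hasDerivAt_rpow_add_one_sub_rpow hα).sub h2)
    (by norm_num) using 2
  norm_num
  ring

theorem tendsto_one_sub_tq {α : ℝ} (hα : α ∈ Set.Ioo (0 : ℝ) 1) :
    Tendsto (fun q => 1 - tq q α) (𝓝[≠] 1) (𝓝 (1 - binEnt α)) := by
  have h := tendsto_div_sub_of_hasDerivAt
    (((hasDerivAt_rpow_add_one_sub_rpow hα).add (hasDerivAt_id 1)).sub_const 2) (by norm_num)
  rw [← neg_add_eq_sub]
  refine h.congr' ?_
  filter_upwards [self_mem_nhdsWithin] with q hq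
  rw [one_sub_tq hq]
  rfl

theorem bound_coefficient_limit_q_to_one
    (α : ℝ) (hα : α ∈ Set.Ioo (0:ℝ) 1) :
    Filter.Tendsto
      (fun q : ℝ =>
        ((α ^ q + (1 - α) ^ q - 2 ^ (1 - q)) / (α ^ q + (1 - α) ^ q + q - 2))
          * (1 - tq q α))
      (nhdsWithin 1 {(1:ℝ)}ᶜ)
      (nhds (Real.log 2 - binEnt α)) := by
  have hlim : 1 - binEnt α ≠ 0 := (sub_pos.mpr (binEnt_lt_one α)).ne'
  have h := ((tendsto_rpow_add_rpow_sub_two_rpow_div hα).div (tendsto_one_sub_tq hα) hlim).mul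
    (tendsto_one_sub_tq hα)
  rw [div_mul_cancel₀ _ hlim] at h
  refine h.congr' ?_
  filter_upwards [self_mem_nhdsWithin] with q hq
  simp only [Pi.div_apply]
  rw [one_sub_tq hq, div_div_div_cancel_right₀ (sub_ne_zero.mpr hq)]
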